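/- arXiv:1202.2888 — 6 statements merged into one kernel-verified Lean document; each statement's English description precedes it below -/
import Mathlib

section
/- Under the setup of the satisfaction iteration (W nonnegative with row sums ≤ 1, raters' coordinates fixed in [0,1], initial non-rater scores 0), the sequence of vectors s^(n) converges to a limit vector s̄ ∈ [0,1]^N satisfying s̄_i = r_i for raters i and s̄_i = Σ_j W_{ij} s̄_j for non-raters i. -/
/-- Convergence of the satisfaction iteration to a fixed point in [0,1]^N. -/
theorem stmt_1 (N : ℕ) (W : Fin N → Fin N → ℝ) (R : Finset (Fin N)) (r : Fin N → ℝ)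
    (hW : ∀ i j, 0 ≤ W i j) (hrow : ∀ i, i ∉ R → ∑ j, W i j ≤ 1)
    (hWrater : ∀ i ∈ R, (W i i = 1 ∧ ∀ j, j ≠ i → W i j = 0))
    (hr : ∀ i ∈ R, r i ∈ Set.Icc (0:ℝ) 1)
    (s : ℕ → Fin N → ℝ)
    (h0 : ∀ i, s 0 i = if i ∈ R then r i else 0)
    (hsucc : ∀ n i, s (n+1) i = if i ∈ R then r i else ∑ j, W i j * s n j) :
    ∃ sbar : Fin N → ℝ,
      (∀ i, Filter.Tendsto (fun n => s n i) Filter.atTop (nhds (sbar i))) ∧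
      (∀ i, sbar i ∈ Set.Icc (0:ℝ) 1) ∧
      (∀ i ∈ R, sbar i = r i) ∧
      (∀ i, i ∉ R → sbar i = ∑ j, W i j * sbar j) := by
  -- bounds
  have h01 : ∀ n i, s n i ∈ Set.Icc (0:ℝ) 1 := by
    intro n
    induction n with
    | zero =>
      intro i
      rw [h0 i]
      split
      · exact hr i ‹_›
      · exact ⟨le_refl 0, zero_le_one⟩
    | succ n ih =>
      intro i
      rw [hsucc n i]
      split
      · exact hr i ‹_›
      · constructor
        · exact Finset.sum_nonneg fun j _ => mul_nonneg (hW i j) (ih j).1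
        · calc ∑ j, W i j * s n j ≤ ∑ j, W i j := by
                apply Finset.sum_le_sum
                intro j _
                nlinarith [(ih j).1, (ih j).2, hW i j]
            _ ≤ 1 := hrow i ‹_›
  -- monotone
  have hmono : ∀ n i, s n i ≤ s (n+1) i := by
    intro n
    induction n with
    | zero =>
      intro i
      rw [h0 i, hsucc 0 i]
      split
      · exact le_refl _
      · exact Finset.sum_nonneg fun j _ => mul_nonneg (hW i j) (h01 0 j).1
    | succ n ih =>
      intro i
      rw [hsucc n i, hsucc (n+1) i]
      split
      · exact le_refl _
      · exact Finset.sum_le_sum fun j _ => mul_le_mul_of_nonneg_left (ih j) (hW i j)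
  have hmono' : ∀ i, Monotone (fun n => s n i) :=
    fun i => monotone_nat_of_le_succ fun n => hmono n i
  have hbdd : ∀ i, BddAbove (Set.range fun n => s n i) :=
    fun i => ⟨1, Set.forall_mem_range.2 fun n => (h01 n i).2⟩
  set sbar : Fin N → ℝ := fun i => ⨆ n, s n i with hsbar
  have htend : ∀ i, Filter.Tendsto (fun n => s n i) Filter.atTop (nhds (sbar i)) :=
    fun i => tendsto_atTop_ciSup (hmono' i) (hbdd i)
  refine ⟨sbar, htend, ?_, ?_, ?_⟩
  · intro i
    constructor
    · exact le_trans (h01 0 i).1 (le_ciSup (hbdd i) 0)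
    · exact ciSup_le fun n => (h01 n i).2
  · intro i hi
    have : Filter.Tendsto (fun n => s n i) Filter.atTop (nhds (r i)) := by
      have : ∀ n, s n i = r i := by
        intro n
        cases n with
        | zero => rw [h0 i, if_pos hi]
        | succ n => rw [hsucc n i, if_pos hi]
      simp only [this]
      exact tendsto_const_nhds
    exact tendsto_nhds_unique (htend i) this
  · intro i hi
    have h1 : Filter.Tendsto (fun n => s (n+1) i) Filter.atTop (nhds (sbar i)) :=
      (htend i).comp (Filter.tendsto_add_atTop_nat 1)
    have h2 : Filter.Tendsto (fun n => ∑ j, W i j * s n j) Filter.atTop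
        (nhds (∑ j, W i j * sbar j)) :=
      tendsto_finset_sum _ fun j _ => (htend j).const_mul (W i j)
    have h3 : (fun n => s (n+1) i) = fun n => ∑ j, W i j * s n j := by
      funext n; rw [hsucc n i, if_neg hi]
    rw [h3] at h1
    exact tendsto_nhds_unique h1 h2
end

section
/- Suppose two vectors s̄, s̃ ∈ [0,1]^N both satisfy: s_i = r_i for every rater i, s_i = Σ_{j ∈ N(i)} w_{ij} s_j for every non-rater i (with w_{ij} > 0 for j ∈ N(i) and Σ_{j∈N(i)} w_{ij} ≤ 1), and s_i = 0 for every user i having no trust path to any rater. Then s̄ = s̃. -/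
/-- Uniqueness of the satisfaction scores. -/
theorem stmt_2 (N : ℕ) (Nbr : Fin N → Finset (Fin N)) (R : Finset (Fin N))
    (r : Fin N → ℝ) (w : Fin N → Fin N → ℝ)
    (hr : ∀ i ∈ R, r i ∈ Set.Icc (0:ℝ) 1)
    (hw : ∀ i, i ∉ R → ∀ j ∈ Nbr i, 0 < w i j)
    (hrow : ∀ i, i ∉ R → ∑ j ∈ Nbr i, w i j ≤ 1)
    (sbar stil : Fin N → ℝ)
    (hbar01 : ∀ i, sbar i ∈ Set.Icc (0:ℝ) 1) (htil01 : ∀ i, stil i ∈ Set.Icc (0:ℝ) 1)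
    (hbarR : ∀ i ∈ R, sbar i = r i) (htilR : ∀ i ∈ R, stil i = r i)
    (hbarN : ∀ i, i ∉ R → sbar i = ∑ j ∈ Nbr i, w i j * sbar j)
    (htilN : ∀ i, i ∉ R → stil i = ∑ j ∈ Nbr i, w i j * stil j)
    (hbar0 : ∀ i, (¬ ∃ k ∈ R, Relation.ReflTransGen (fun a b => b ∈ Nbr a) i k) → sbar i = 0)
    (htil0 : ∀ i, (¬ ∃ k ∈ R, Relation.ReflTransGen (fun a b => b ∈ Nbr a) i k) → stil i = 0) :
    sbar = stil := by
  rcases Nat.eq_zero_or_pos N with hN | hNpos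
  · subst hN; funext i; exact i.elim0
  set d : Fin N → ℝ := fun i => |sbar i - stil i| with hd
  have hd0 : ∀ i, 0 ≤ d i := fun i => abs_nonneg _
  obtain ⟨i0, -, hmax⟩ := Finset.exists_max_image Finset.univ d
    ⟨⟨0, hNpos⟩, Finset.mem_univ _⟩
  set M := d i0 with hM
  have hmax' : ∀ i, d i ≤ M := fun i => hmax i (Finset.mem_univ i)
  have hMnn : 0 ≤ M := hd0 i0
  have hdR : ∀ k ∈ R, d k = 0 := by
    intro k hk
    simp [hd, hbarR k hk, htilR k hk]
  -- Main claim: M = 0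
  have hM0 : M = 0 := by
    by_contra hMne
    have hMpos : 0 < M := lt_of_le_of_ne hMnn (Ne.symm hMne)
    -- step: the maximum propagates along trusted edges
    have step : ∀ i, d i = M → ∀ j ∈ Nbr i, d j = M := by
      intro i hi j hj
      have hiR : i ∉ R := by
        intro hR
        rw [hdR i hR] at hi
        exact hMne hi.symm
      by_contra hne
      have hjlt : d j < M := lt_of_le_of_ne (hmax' j) hne
      have hsum : d i ≤ ∑ j ∈ Nbr i, w i j * d j := by
        have : sbar i - stil i = ∑ j ∈ Nbr i, w i j * (sbar j - stil j) := by
          rw [hbarN i hiR, htilN i hiR, ← Finset.sum_sub_distrib]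
          congr 1; ext j; ring
        calc d i = |∑ j ∈ Nbr i, w i j * (sbar j - stil j)| := by rw [hd]; simp [this]
          _ ≤ ∑ j ∈ Nbr i, |w i j * (sbar j - stil j)| := Finset.abs_sum_le_sum_abs _ _
          _ = ∑ j ∈ Nbr i, w i j * d j := by
              apply Finset.sum_congr rfl
              intro x hx
              rw [abs_mul, abs_of_pos (hw i hiR x hx)]
      have hlt : ∑ j ∈ Nbr i, w i j * d j < ∑ j ∈ Nbr i, w i j * M := by
        apply Finset.sum_lt_sum
        · intro x hx
          exact mul_le_mul_of_nonneg_left (hmax' x) (le_of_lt (hw i hiR x hx))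
        · exact ⟨j, hj, mul_lt_mul_of_pos_left hjlt (hw i hiR j hj)⟩
      have hle : ∑ j ∈ Nbr i, w i j * M ≤ M := by
        rw [← Finset.sum_mul]
        calc (∑ j ∈ Nbr i, w i j) * M ≤ 1 * M :=
              mul_le_mul_of_nonneg_right (hrow i hiR) hMnn
          _ = M := one_mul M
      have : d i < M := lt_of_le_of_lt hsum (lt_of_lt_of_le hlt hle)
      rw [hi] at this
      exact lt_irrefl M this
    -- propagation along paths
    have path : ∀ i k : Fin N, Relation.ReflTransGen (fun a b => b ∈ Nbr a) i k →
        d i = M → d k = M := by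
      intro i k h hi
      induction h with
      | refl => exact hi
      | tail _ hbc ih => exact step _ ih _ hbc
    by_cases hconn : ∃ k ∈ R, Relation.ReflTransGen (fun a b => b ∈ Nbr a) i0 k
    · obtain ⟨k, hk, hp⟩ := hconn
      have := path i0 k hp rfl
      rw [hdR k hk] at this
      exact hMne this.symm
    · have h1 := hbar0 i0 hconn
      have h2 := htil0 i0 hconn
      apply hMne
      rw [hM, hd]; simp [h1, h2]
  funext i
  have : d i ≤ 0 := hM0 ▸ hmax' i
  have : d i = 0 := le_antisymm this (hd0 i)
  have := abs_eq_zero.mp this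
  linarith
end

section
/- Necessary rater proportion: with expected satisfaction μ(k) = trk(1−e^{−λ})/(1 − t(1−k)(1−e^{−λ})), threshold b ∈ (0,1), and target satisfied proportion T̃, the condition P(s_i ≤ b) ≤ 1 − T̃ together with the reverse Markov bound P(s_i ≤ b) ≥ (b − μ(k))/b implies k ≥ b T̃ (1 − t(1−e^{−λ})) / (t(1−e^{−λ})(r − b T̃)), provided r > b T̃. -/
/-! Chaining the two bounds on `P(s_i ≤ b)` gives `b T̃ ≤ μ(k)`; after clearing the positive
denominator of `μ(k)` this inequality is linear in `k`, and solving it for `k` gives the bound. -/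

open Real

/-- The expected satisfaction `μ(k)` of the paper, written with `q = t (1 - e^{-λ})`. -/
noncomputable def expectedSatisfaction (q r k : ℝ) : ℝ := r * k * q / (1 - (1 - k) * q)

theorem le_expectedSatisfaction_iff {q r k c : ℝ} (hq : 0 < q) (hD : 0 < 1 - (1 - k) * q)
    (hc : c < r) : c ≤ expectedSatisfaction q r k ↔ c * (1 - q) / (q * (r - c)) ≤ k := by
  rw [expectedSatisfaction, le_div_iff₀ hD, div_le_iff₀ (mul_pos hq (sub_pos.2 hc))]
  constructor <;> intro h <;> linear_combination h

theorem mul_le_of_sub_div_le_one_sub {b μ T : ℝ} (hb : 0 < b) (h : (b - μ) / b ≤ 1 - T) :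
    b * T ≤ μ := by
  rw [div_le_iff₀ hb] at h
  linarith

theorem stmt_11_general (t r k lam b T P μ : ℝ)
    (ht : t ∈ Set.Ioc (0:ℝ) 1)
    (hlam : 0 < lam)
    (hb : b ∈ Set.Ioo (0:ℝ) 1)
    (hcontr : t * (1 - k) * (1 - exp (-lam)) < 1)
    (hrbT : b * T < r)
    (hμ : μ = t * r * k * (1 - exp (-lam)) / (1 - t * (1 - k) * (1 - exp (-lam))))
    (hP1 : P ≤ 1 - T) (hP2 : (b - μ) / b ≤ P) :
    b * T * (1 - t * (1 - exp (-lam))) / (t * (1 - exp (-lam)) * (r - b * T)) ≤ k := by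
  have hq : 0 < t * (1 - exp (-lam)) :=
    mul_pos ht.1 (sub_pos.2 (exp_lt_one_iff.2 (neg_neg_of_pos hlam)))
  have hD : 0 < 1 - (1 - k) * (t * (1 - exp (-lam))) := by linarith
  have hμ' : μ = expectedSatisfaction (t * (1 - exp (-lam))) r k := by
    rw [hμ, expectedSatisfaction]
    ring
  rw [← le_expectedSatisfaction_iff hq hD hrbT, ← hμ']
  exact mul_le_of_sub_div_le_one_sub hb.1 (hP2.trans hP1)

/-- Necessary rater proportion k^min(T̃). -/
theorem stmt_11 (t r k lam b T P μ : ℝ)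
    (ht : t ∈ Set.Ioc (0:ℝ) 1) (hr : r ∈ Set.Ioc (0:ℝ) 1)
    (hk : k ∈ Set.Icc (0:ℝ) 1) (hlam : 0 < lam)
    (hb : b ∈ Set.Ioo (0:ℝ) 1) (hT : T ∈ Set.Icc (0:ℝ) 1)
    (hcontr : t * (1 - k) * (1 - exp (-lam)) < 1)
    (hrb : b < r) (hrbT : b * T < r)
    (hμ : μ = t * r * k * (1 - exp (-lam)) / (1 - t * (1 - k) * (1 - exp (-lam))))
    (hP1 : P ≤ 1 - T) (hP2 : (b - μ) / b ≤ P) :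
    b * T * (1 - t * (1 - exp (-lam))) / (t * (1 - exp (-lam)) * (r - b * T)) ≤ k :=
  stmt_11_general t r k lam b T P μ ht hlam hb hcontr hrbT hμ hP1 hP2
end

section
/- In the bipartite reduction graph (elements point to sets containing them, thresholds 0), for any rater set N_R there is a rater set N_R' ⊆ {S_1,...,S_n} with |N_R'| ≤ |N_R| satisfying at least as many element-nodes; hence some optimal solution to MAXIMUM-SATISFACTION uses only set-nodes as raters, and an element node U_j is satisfied iff some set containing U_j is a rater. -/
open Finset

/-- Satisfaction (score > 0, thresholds 0) in the bipartite reduction graph: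
a node is satisfied iff it is a rater or it is an element node pointing to a
rater set-node. -/
def bipartiteSat {m n : ℕ} (S : Fin n → Finset (Fin m))
    (NR : Finset (Fin m ⊕ Fin n)) (v : Fin m ⊕ Fin n) : Prop :=
  v ∈ NR ∨ ∃ i : Fin n, Sum.inr i ∈ NR ∧ ∃ u : Fin m, v = Sum.inl u ∧ u ∈ S i

/-- Any rater set can be replaced by one consisting only of
set-nodes, of no greater cardinality, satisfying at least as many nodes; and for
a set-node-only rater set, an element node is satisfied iff some set containing
it is a rater. -/
theorem stmt_15 (m n : ℕ) (S : Fin n → Finset (Fin m))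
    (hcov : ∀ u : Fin m, ∃ i : Fin n, u ∈ S i) :
    ∀ NR : Finset (Fin m ⊕ Fin n),
      (∃ NR' : Finset (Fin m ⊕ Fin n),
        (∀ v ∈ NR', ∃ i : Fin n, v = Sum.inr i) ∧
        NR'.card ≤ NR.card ∧
        Nat.card {v | bipartiteSat S NR v} ≤ Nat.card {v | bipartiteSat S NR' v}) ∧
      ∀ NR' : Finset (Fin m ⊕ Fin n), (∀ v ∈ NR', ∃ i : Fin n, v = Sum.inr i) →
        ∀ u : Fin m,
          (bipartiteSat S NR' (Sum.inl u) ↔ ∃ i : Fin n, u ∈ S i ∧ Sum.inr i ∈ NR') := by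
  intro NR
  constructor
  · -- construct NR' as image of NR
    classical
    set f : Fin m ⊕ Fin n → Fin m ⊕ Fin n :=
      fun v => Sum.elim (fun u => Sum.inr (hcov u).choose) Sum.inr v with hf
    refine ⟨NR.image f, ?_, Finset.card_image_le, ?_⟩
    · intro v hv
      rcases Finset.mem_image.mp hv with ⟨w, _, rfl⟩
      rcases w with u | i
      · exact ⟨(hcov u).choose, rfl⟩
      · exact ⟨i, rfl⟩
    · apply Nat.card_mono (Set.toFinite _)
      intro v hv
      rcases hv with hv | ⟨i, hi, u, rfl, hu⟩
      · rcases v with u | i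
        · exact Or.inr ⟨(hcov u).choose, Finset.mem_image.mpr ⟨Sum.inl u, hv, rfl⟩,
            u, rfl, (hcov u).choose_spec⟩
        · exact Or.inl (Finset.mem_image.mpr ⟨Sum.inr i, hv, rfl⟩)
      · exact Or.inr ⟨i, Finset.mem_image.mpr ⟨Sum.inr i, hi, rfl⟩, u, rfl, hu⟩
  · intro NR' hNR' u
    constructor
    · rintro (h | ⟨i, hi, u', hu', hS⟩)
      · rcases hNR' _ h with ⟨i, hi⟩; cases hi
      · cases hu'; exact ⟨i, hS, hi⟩
    · rintro ⟨i, hS, hi⟩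
      exact Or.inr ⟨i, hi, u, rfl, hS⟩
end

section
/- Independence from disconnected users: if user j has no directed path to or from user i in the trust graph (in the undirected sense of connectivity of the trust relation), then removing j and all its incident edges does not change the satisfaction score of i. -/
/-!
On the weakly connected component `C` of `i` (which is closed under following trust edges and
avoids `j`), the scores with and without `j` solve the same system, so their difference `d`
solves the homogeneous one: `d = 0` at raters and at nodes reaching no rater, and `d` is a
sub-stochastic positive average of its out-neighbours elsewhere. If `|d|` attained a positive
maximum on `C`, the averaging would force the maximum along every trust path, in particular
along one ending at a rater, where `d = 0`.
-/

open Finset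

theorem abs_eq_of_abs_weighted_sum_eq {ι : Type*} {S : Finset ι} {w x : ι → ℝ} {M : ℝ}
    (hw : ∀ b ∈ S, 0 < w b) (hsum : ∑ b ∈ S, w b ≤ 1) (hx : ∀ b ∈ S, |x b| ≤ M)
    (hM : |∑ b ∈ S, w b * x b| = M) : ∀ b ∈ S, |x b| = M := by
  have hM0 : 0 ≤ M := hM ▸ abs_nonneg _
  have hgap : ∀ b ∈ S, 0 ≤ w b * (M - |x b|) :=
    fun b hb => mul_nonneg (hw b hb).le (sub_nonneg.mpr (hx b hb))
  have hsum_gap : ∑ b ∈ S, w b * (M - |x b|) = 0 := by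
    refine le_antisymm ?_ (sum_nonneg hgap)
    have hlow : M ≤ ∑ b ∈ S, w b * |x b| :=
      calc M = |∑ b ∈ S, w b * x b| := hM.symm
        _ ≤ ∑ b ∈ S, |w b * x b| := abs_sum_le_sum_abs _ _
        _ = ∑ b ∈ S, w b * |x b| :=
          sum_congr rfl fun b hb => by rw [abs_mul, abs_of_pos (hw b hb)]
    have hup : (∑ b ∈ S, w b) * M ≤ M := mul_le_of_le_one_left hM0 hsum
    simp only [mul_sub, sum_sub_distrib, ← sum_mul]
    linarith
  intro b hb
  have := (sum_eq_zero_iff_of_nonneg hgap).mp hsum_gap b hb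
  rcases mul_eq_zero.mp this with h | h
  · exact absurd h (hw b hb).ne'
  · linarith

theorem eq_zero_of_homogeneous_scores {α : Type*} {Nbr : α → Finset α} {R : Finset α}
    {w : α → α → ℝ} {d : α → ℝ} {C : Set α}
    (hC : ∀ a ∈ C, ∀ b ∈ Nbr a, b ∈ C) (hCfin : C.Finite)
    (hw : ∀ a, a ∉ R → ∀ b ∈ Nbr a, 0 < w a b)
    (hrow : ∀ a, a ∉ R → ∑ b ∈ Nbr a, w a b ≤ 1)
    (hdR : ∀ a ∈ C, a ∈ R → d a = 0)
    (hdN : ∀ a ∈ C, a ∉ R → d a = ∑ b ∈ Nbr a, w a b * d b)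
    (hd0 : ∀ a ∈ C, (¬ ∃ k ∈ R, Relation.ReflTransGen (fun x y => y ∈ Nbr x) a k) → d a = 0) :
    ∀ a ∈ C, d a = 0 := by
  by_contra! hne
  obtain ⟨a, haC, had⟩ := hne
  obtain ⟨a₀, ha₀C, hmax⟩ := Set.exists_max_image C (fun a => |d a|) hCfin ⟨a, haC⟩
  set M := |d a₀|
  have hMpos : 0 < M := (abs_pos.mpr had).trans_le (hmax a haC)
  have hnotR : ∀ b ∈ C, |d b| = M → b ∉ R := fun b hbC hb hbR => by
    rw [hdR b hbC hbR, abs_zero] at hb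
    exact hMpos.ne hb
  have hmax_path : ∀ b, Relation.ReflTransGen (fun x y => y ∈ Nbr x) a₀ b → b ∈ C ∧ |d b| = M := by
    intro b hpath
    induction hpath with
    | refl => exact ⟨ha₀C, rfl⟩
    | @tail b c _ hbc ih =>
      obtain ⟨hbC, hb⟩ := ih
      have hbR := hnotR b hbC hb
      refine ⟨hC b hbC c hbc, abs_eq_of_abs_weighted_sum_eq (hw b hbR) (hrow b hbR)
        (fun x hx => hmax x (hC b hbC x hx)) ?_ c hbc⟩
      rw [← hdN b hbC hbR, hb]
  obtain ⟨k, hkR, hk⟩ : ∃ k ∈ R, Relation.ReflTransGen (fun x y => y ∈ Nbr x) a₀ k := by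
    by_contra h
    exact hMpos.ne' (by simp [M, hd0 a₀ ha₀C h])
  obtain ⟨hkC, hkM⟩ := hmax_path k hk
  exact hnotR k hkC hkM hkR

theorem stmt_16_general (N : ℕ) (Nbr : Fin N → Finset (Fin N)) (R : Finset (Fin N))
    (r : Fin N → ℝ) (w : Fin N → Fin N → ℝ)
    (hw : ∀ a, a ∉ R → ∀ b ∈ Nbr a, 0 < w a b)
    (hrow : ∀ a, a ∉ R → ∑ b ∈ Nbr a, w a b ≤ 1)
    (i j : Fin N)
    (hdisc : ¬ Relation.ReflTransGen (fun a b => b ∈ Nbr a ∨ a ∈ Nbr b) i j)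
    (s s' : Fin N → ℝ)
    -- s solves the full system
    (hsR : ∀ a ∈ R, s a = r a)
    (hsN : ∀ a, a ∉ R → s a = ∑ b ∈ Nbr a, w a b * s b)
    (hs0 : ∀ a, (¬ ∃ k ∈ R, Relation.ReflTransGen (fun x y => y ∈ Nbr x) a k) → s a = 0)
    -- s' solves the system on the graph with node j (and its incident edges) removed
    (hs'R : ∀ a ∈ R, a ≠ j → s' a = r a)
    (hs'N : ∀ a, a ∉ R → a ≠ j → s' a = ∑ b ∈ (Nbr a).erase j, w a b * s' b)
    (hs'0 : ∀ a, a ≠ j →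
      (¬ ∃ k ∈ R, k ≠ j ∧ Relation.ReflTransGen (fun x y => y ∈ (Nbr x).erase j) a k) →
      s' a = 0) :
    s' i = s i := by
  set C := {a | Relation.ReflTransGen (fun a b => b ∈ Nbr a ∨ a ∈ Nbr b) i a}
  have hC : ∀ a ∈ C, ∀ b ∈ Nbr a, b ∈ C := fun a ha b hb => ha.tail (Or.inl hb)
  have hCj : ∀ a ∈ C, a ≠ j := by rintro a ha rfl; exact hdisc ha
  have herase : ∀ a ∈ C, (Nbr a).erase j = Nbr a :=
    fun a ha => erase_eq_of_notMem fun hj => hCj j (hC a ha j hj) rfl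
  have hd := eq_zero_of_homogeneous_scores (d := fun a => s a - s' a) hC (Set.toFinite C) hw hrow
    (fun a ha haR => by simp only [hsR a haR, hs'R a haR (hCj a ha), sub_self])
    (fun a ha haR => by
      simp only [hsN a haR, hs'N a haR (hCj a ha), herase a ha, mul_sub, sum_sub_distrib])
    (fun a ha hnr => by
      have hnr' : ¬ ∃ k ∈ R, k ≠ j ∧
          Relation.ReflTransGen (fun x y => y ∈ (Nbr x).erase j) a k :=
        fun ⟨k, hkR, _, hk⟩ => hnr ⟨k, hkR, Relation.ReflTransGen.mono (fun _ _ => mem_of_mem_erase) _ _ hk⟩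
      simp only [hs0 a hnr, hs'0 a (hCj a ha) hnr', sub_self])
    i .refl
  linarith

/-- Independence from disconnected users: if j is not connected to i
(even in the undirected sense) in the trust graph, then the satisfaction score of i
in the network with j removed equals its score in the full network. -/
theorem stmt_16 (N : ℕ) (Nbr : Fin N → Finset (Fin N)) (R : Finset (Fin N))
    (r : Fin N → ℝ) (w : Fin N → Fin N → ℝ)
    (hr : ∀ a ∈ R, r a ∈ Set.Icc (0:ℝ) 1)
    (hw : ∀ a, a ∉ R → ∀ b ∈ Nbr a, 0 < w a b)
    (hrow : ∀ a, a ∉ R → ∑ b ∈ Nbr a, w a b ≤ 1)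
    (i j : Fin N) (hij : i ≠ j)
    (hdisc : ¬ Relation.ReflTransGen (fun a b => b ∈ Nbr a ∨ a ∈ Nbr b) i j)
    (s s' : Fin N → ℝ)
    -- s solves the full system
    (hsR : ∀ a ∈ R, s a = r a)
    (hsN : ∀ a, a ∉ R → s a = ∑ b ∈ Nbr a, w a b * s b)
    (hs0 : ∀ a, (¬ ∃ k ∈ R, Relation.ReflTransGen (fun x y => y ∈ Nbr x) a k) → s a = 0)
    -- s' solves the system on the graph with node j (and its incident edges) removed
    (hs'R : ∀ a ∈ R, a ≠ j → s' a = r a)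
    (hs'N : ∀ a, a ∉ R → a ≠ j → s' a = ∑ b ∈ (Nbr a).erase j, w a b * s' b)
    (hs'0 : ∀ a, a ≠ j →
      (¬ ∃ k ∈ R, k ≠ j ∧ Relation.ReflTransGen (fun x y => y ∈ (Nbr x).erase j) a k) →
      s' a = 0) :
    s' i = s i :=
  stmt_16_general N Nbr R r w hw hrow i j hdisc s s' hsR hsN hs0 hs'R hs'N hs'0
end

section
/- Strict contraction on components reaching raters: in the satisfaction system, if two solutions s̄, s̃ (both satisfying the fixed-point equations, with weights w_{ij} > 0 for j ∈ N(i) and Σ_{j∈N(i)} w_{ij} ≤ 1) differ, then the maximizer i₀ of s̄_i − s̃_i must satisfy Σ_{j∈N(i₀)} w_{i₀j} = 1 and s̄_j − s̃_j = s̄_{i₀} − s̃_{i₀} for every j ∈ N(i₀), and no j ∈ N(i₀) is a rater. -/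
open Finset

/-- Core step of the uniqueness proof: at a node i₀ maximizing the
(positive) difference of two solutions, the weights sum to 1, all trusted
neighbors attain the same maximal difference, and none of them is a rater. -/
theorem stmt_19 (N : ℕ) (Nbr : Fin N → Finset (Fin N)) (R : Finset (Fin N))
    (r : Fin N → ℝ) (w : Fin N → Fin N → ℝ)
    (hw : ∀ i, i ∉ R → ∀ j ∈ Nbr i, 0 < w i j)
    (hrow : ∀ i, i ∉ R → ∑ j ∈ Nbr i, w i j ≤ 1)
    (sbar stil : Fin N → ℝ)
    (hbarR : ∀ i ∈ R, sbar i = r i) (htilR : ∀ i ∈ R, stil i = r i)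
    (hbarN : ∀ i, i ∉ R → sbar i = ∑ j ∈ Nbr i, w i j * sbar j)
    (htilN : ∀ i, i ∉ R → stil i = ∑ j ∈ Nbr i, w i j * stil j)
    (i0 : Fin N)
    (hmax : ∀ i, sbar i - stil i ≤ sbar i0 - stil i0)
    (hpos : 0 < sbar i0 - stil i0) :
    (∑ j ∈ Nbr i0, w i0 j = 1) ∧
    (∀ j ∈ Nbr i0, sbar j - stil j = sbar i0 - stil i0) ∧
    (∀ j ∈ Nbr i0, j ∉ R) := by
  set d : Fin N → ℝ := fun i => sbar i - stil i with hd
  have hi0 : i0 ∉ R := by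
    intro h
    have : sbar i0 - stil i0 = 0 := by rw [hbarR i0 h, htilR i0 h]; ring
    linarith
  have key : d i0 = ∑ j ∈ Nbr i0, w i0 j * d j := by
    simp only [hd]
    rw [hbarN i0 hi0, htilN i0 hi0, ← Finset.sum_sub_distrib]
    exact Finset.sum_congr rfl fun j _ => by ring
  -- each term ≤ w i0 j * d i0
  have hterm : ∀ j ∈ Nbr i0, w i0 j * d j ≤ w i0 j * d i0 := fun j hj =>
    mul_le_mul_of_nonneg_left (hmax j) (le_of_lt (hw i0 hi0 j hj))
  have hsum1 : ∑ j ∈ Nbr i0, w i0 j * d j ≤ (∑ j ∈ Nbr i0, w i0 j) * d i0 := by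
    rw [Finset.sum_mul]
    exact Finset.sum_le_sum hterm
  have hpos' : 0 < d i0 := hpos
  have hsum2 : (∑ j ∈ Nbr i0, w i0 j) * d i0 ≤ d i0 := by
    nlinarith [hrow i0 hi0, hpos']
  have heq1 : ∑ j ∈ Nbr i0, w i0 j * d j = (∑ j ∈ Nbr i0, w i0 j) * d i0 :=
    le_antisymm hsum1 (by linarith [key])
  have hrow1 : ∑ j ∈ Nbr i0, w i0 j = 1 := by
    have : (∑ j ∈ Nbr i0, w i0 j) * d i0 = d i0 := by linarith [key]
    have := mul_right_cancel₀ (ne_of_gt hpos') (by linarith : (∑ j ∈ Nbr i0, w i0 j) * d i0 = 1 * d i0)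
    exact this
  have hall : ∀ j ∈ Nbr i0, d j = d i0 := by
    have hterm_eq : ∀ j ∈ Nbr i0, w i0 j * d j = w i0 j * d i0 := by
      intro j hj
      have := (Finset.sum_eq_sum_iff_of_le hterm).mp (by rw [heq1, Finset.sum_mul]) j hj
      exact this
    intro j hj
    exact mul_left_cancel₀ (ne_of_gt (hw i0 hi0 j hj)) (hterm_eq j hj)
  refine ⟨hrow1, hall, fun j hj hjR => ?_⟩
  have : d j = 0 := by simp [hd, hbarR j hjR, htilR j hjR]
  rw [hall j hj] at this
  exact absurd this (ne_of_gt hpos')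
end
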